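/- arXiv:2006.02249 — 2 statements merged into one kernel-verified Lean document; each statement's English description precedes it below -/
import Mathlib

section
/- Let (T,σ) be a leaf-colored tree explaining the BMG (𝔾,σ) and suppose (𝔾,σ) contains an hourglass [xy ⋈ x'y'] as an induced subgraph if and only if there is an inner vertex u of T with three distinct children v₁, v₂, v₃ and two distinct colors r, s such that: r ∈ σ(L(T(v₁))), r,s ∈ σ(L(T(v₂))), s ∈ σ(L(T(v₃))), s ∉ σ(L(T(v₁))), and r ∉ σ(L(T(v₃))). -/
/-- A finite rooted tree, given by a parent function: every vertex reaches the
root along the parent chain. -/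
structure PTree (V : Type*) where
  parent : V → Option V
  root : V
  root_parent : parent root = none
  connected : ∀ v : V, Relation.ReflTransGen (fun a b => parent a = some b) v root

namespace PTree

variable {V C : Type*}

/-- `T.anc a b` : `b` is an ancestor of `a` (i.e. `a ⪯ b` in the ancestor order). -/
def anc (T : PTree V) (a b : V) : Prop :=
  Relation.ReflTransGen (fun x y => T.parent x = some y) a b

/-- `v` is a child of `u`. -/
def child (T : PTree V) (v u : V) : Prop := T.parent v = some u

/-- A leaf is a vertex without children. -/
def isLeaf (T : PTree V) (v : V) : Prop := ∀ w, ¬ T.child w v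

/-- `u` is the last common ancestor of `x` and `y`. -/
def isLCA (T : PTree V) (u x y : V) : Prop :=
  T.anc x u ∧ T.anc y u ∧ ∀ w, T.anc x w → T.anc y w → T.anc u w

/-- `σ(L(T(v)))` : the set of colors of the leaves of the subtree rooted at `v`. -/
def leafColors (T : PTree V) (σ : V → C) (v : V) : Set C :=
  {c | ∃ x, T.isLeaf x ∧ T.anc x v ∧ σ x = c}

/-- `y` is a best match of `x` in `(T,σ)`. -/
def bestMatch (T : PTree V) (σ : V → C) (x y : V) : Prop :=
  T.isLeaf x ∧ T.isLeaf y ∧ σ x ≠ σ y ∧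
    ∀ y', T.isLeaf y' → σ y' = σ y →
      ∀ u u', T.isLCA u x y → T.isLCA u' x y' → T.anc u u'

/-- `x` and `y` are reciprocal best matches, i.e. `xy` is an edge of the BMG `G(T,σ)`. -/
def edge (T : PTree V) (σ : V → C) (x y : V) : Prop :=
  T.bestMatch σ x y ∧ T.bestMatch σ y x

/-- Every inner vertex (other than the planted root) has exactly two children. -/
def Binary (T : PTree V) : Prop :=
  ∀ u : V, u ≠ T.root → ¬ T.isLeaf u →
    ∃ v₁ v₂, v₁ ≠ v₂ ∧ T.child v₁ u ∧ T.child v₂ u ∧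
      ∀ w, T.child w u → w = v₁ ∨ w = v₂

/-- Adjacency in the color-set intersection graph `𝔠_T(u)`. -/
def csiAdj (T : PTree V) (σ : V → C) (u a b : V) : Prop :=
  a ≠ b ∧ T.child a u ∧ T.child b u ∧ (T.leafColors σ a ∩ T.leafColors σ b).Nonempty

/-- `a` and `b` lie in the same connected component of `𝔠_T(u)`. -/
def sameComp (T : PTree V) (σ : V → C) (u a b : V) : Prop :=
  Relation.ReflTransGen (T.csiAdj σ u) a b

/-- `S` is a connected component of `𝔠_T(u)` with more than one element. -/
def IsBigComp (T : PTree V) (σ : V → C) (u : V) (S : Set V) : Prop :=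
  (∃ a, T.child a u ∧ S = {b | T.sameComp σ u a b}) ∧ ∃ a ∈ S, ∃ b ∈ S, a ≠ b

end PTree

/-- `(T, σT)` explains the colored digraph `(E, σ)` on the gene set `L`, with
`ι` identifying the genes with the leaves of `T`. -/
def Explains {V L C : Type*} (T : PTree V) (ι : L → V) (σT : V → C) (σ : L → C)
    (E : L → L → Prop) : Prop :=
  Function.Injective ι ∧ (∀ l, T.isLeaf (ι l)) ∧ (∀ v, T.isLeaf v → ∃ l, ι l = v) ∧
    (∀ l, σT (ι l) = σ l) ∧ ∀ x y, E x y ↔ T.bestMatch σT (ι x) (ι y)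

/-- The parent function after contracting the edge `uv` (with `v` a child of `u`). -/
def contractedParent {V : Type*} [DecidableEq V] (T : PTree V) (u v w : V) : Option V :=
  (T.parent w).map (fun p => if p = v then u else p)

/-- One step towards the contracted parent when contracting all edges whose lower
endpoints form the set `A`. -/
def multiContractStep {V : Type*} (T : PTree V) (A : Set V) (a b : V) : Prop :=
  T.parent a = some b ∧ b ∈ A

/-- Event types for inner vertices of an event-labeled gene tree. -/
inductive Event : Type
  | speciation
  | duplication

namespace PTree

variable {V C : Type*}

def iter (T : PTree V) : ℕ → V → Option V := fun n =>
  Nat.rec (motive := fun _ => V → Option V) (fun v => some v)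
    (fun _ ih v => (T.parent v).bind ih) n

@[simp] lemma iter_zero (T : PTree V) (v : V) : T.iter 0 v = some v := rfl

@[simp] lemma iter_succ (T : PTree V) (n : ℕ) (v : V) :
    T.iter (n + 1) v = (T.parent v).bind (T.iter n) := rfl

lemma iter_add (T : PTree V) (m n : ℕ) (v : V) :
    T.iter (m + n) v = (T.iter m v).bind (T.iter n) := by
  induction m generalizing v with
  | zero => simp [iter]
  | succ m ih =>
      have he : m + 1 + n = (m + n) + 1 := by omega
      rw [he, iter_succ, iter_succ]
      cases h : T.parent v with
      | none => simp
      | some p => simp [ih]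

variable {T : PTree V}

lemma anc_iff_iter {a b : V} : T.anc a b ↔ ∃ n, T.iter n a = some b := by
  constructor
  · intro h
    induction h with
    | refl => exact ⟨0, rfl⟩
    | tail _ hstep ih =>
        obtain ⟨n, hn⟩ := ih
        refine ⟨n + 1, ?_⟩
        rw [iter_add, hn]
        simp [hstep]
  · rintro ⟨n, hn⟩
    induction n generalizing a with
    | zero => simp only [iter_zero, Option.some.injEq] at hn; exact hn ▸ Relation.ReflTransGen.refl
    | succ n ih =>
        rw [iter_succ] at hn
        cases h : T.parent a with
        | none => rw [h] at hn; simp at hn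
        | some p =>
            rw [h] at hn
            exact Relation.ReflTransGen.head h (ih hn)

lemma parent_ne_self (v : V) : T.parent v ≠ some v := by
  intro h
  have hiter : ∀ n, T.iter n v = some v := by
    intro n; induction n with
    | zero => rfl
    | succ n ih => rw [iter_succ, h]; simpa using ih
  obtain ⟨j, hj⟩ := anc_iff_iter.1 (T.connected v)
  have hv : v = T.root := by have := hiter j; rw [hj] at this; exact (Option.some.inj this).symm
  rw [hv] at h
  rw [T.root_parent] at h
  exact Option.some_ne_none _ h.symm

lemma anc_antisymm {a b : V} (hab : T.anc a b) (hba : T.anc b a) : a = b := by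
  obtain ⟨n, hn⟩ := anc_iff_iter.1 hab
  obtain ⟨m, hm⟩ := anc_iff_iter.1 hba
  rcases Nat.eq_zero_or_pos n with h0 | hpos
  · subst h0; exact Option.some.inj ((iter_zero T a) ▸ hn)
  have hcyc : T.iter (n + m) a = some a := by rw [iter_add, hn]; exact hm
  have hmul : ∀ c, T.iter (c * (n + m)) a = some a := by
    intro c; induction c with
    | zero => simp
    | succ c ih => rw [Nat.succ_mul, iter_add, ih]; exact hcyc
  obtain ⟨j, hj⟩ := anc_iff_iter.1 (T.connected a)
  have hk : (j + 1) * (n + m) ≥ j + 1 := Nat.le_mul_of_pos_right _ (by omega)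
  set K := (j + 1) * (n + m) with hK
  have : T.iter K a = (T.iter j a).bind (T.iter (K - j)) := by
    rw [← iter_add]; congr 1; omega
  rw [hmul, hj] at this
  simp only [Option.bind_some] at this
  -- this : some a = T.iter (K - j) T.root
  have hKj : K - j = (K - j - 1) + 1 := by omega
  rw [hKj, iter_succ, T.root_parent] at this
  simp at this

lemma anc_total {x a b : V} (ha : T.anc x a) (hb : T.anc x b) :
    T.anc a b ∨ T.anc b a := by
  obtain ⟨n, hn⟩ := anc_iff_iter.1 ha
  obtain ⟨m, hm⟩ := anc_iff_iter.1 hb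
  rcases le_total n m with h | h
  · left
    refine anc_iff_iter.2 ⟨m - n, ?_⟩
    have : T.iter m x = (T.iter n x).bind (T.iter (m - n)) := by
      rw [← iter_add]; congr 1; omega
    rw [hn, hm] at this
    simpa using this.symm
  · right
    refine anc_iff_iter.2 ⟨n - m, ?_⟩
    have : T.iter n x = (T.iter m x).bind (T.iter (n - m)) := by
      rw [← iter_add]; congr 1; omega
    rw [hn, hm] at this
    simpa using this.symm

lemma child_not_anc {v u : V} (h : T.child v u) : ¬ T.anc u v := by
  intro hanc
  have : u = v := anc_antisymm hanc (Relation.ReflTransGen.single h)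
  subst this
  exact parent_ne_self u h

lemma sibling_not_anc {v w u : V} (hv : T.child v u) (hw : T.child w u) (hne : v ≠ w) :
    ¬ T.anc v w := by
  intro h
  rcases Relation.ReflTransGen.cases_head h with rfl | ⟨c, hc, hcw⟩
  · exact hne rfl
  · rw [hv] at hc
    rw [← Option.some.inj hc] at hcw
    exact child_not_anc hw hcw

lemma exists_lca (x y : V) : ∃ u, T.isLCA u x y := by
  have := T.connected x
  induction this using Relation.ReflTransGen.head_induction_on with
  | refl =>
      exact ⟨T.root, Relation.ReflTransGen.refl, T.connected y, fun w hw _ => hw⟩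
  | @head a c hstep _ ih =>
      by_cases h : T.anc y a
      · exact ⟨a, Relation.ReflTransGen.refl, h, fun w hw _ => hw⟩
      · obtain ⟨u, hu1, hu2, hu3⟩ := ih
        refine ⟨u, Relation.ReflTransGen.head hstep hu1, hu2, ?_⟩
        intro w hw hyw
        rcases Relation.ReflTransGen.cases_head hw with rfl | ⟨c₂, hc₂, hcw⟩
        · exact absurd hyw h
        · rw [hstep] at hc₂
          rw [← Option.some.inj hc₂] at hcw
          exact hu3 w hcw hyw

lemma lca_unique {u u' x y : V} (h : T.isLCA u x y) (h' : T.isLCA u' x y) : u = u' :=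
  anc_antisymm (h.2.2 u' h'.1 h'.2.1) (h'.2.2 u h.1 h.2.1)

lemma isLCA.symm {u x y : V} (h : T.isLCA u x y) : T.isLCA u y x :=
  ⟨h.2.1, h.1, fun w hw hw' => h.2.2 w hw' hw⟩

lemma isLeaf.anc_eq {x a : V} (h : T.isLeaf x) (ha : T.anc a x) : a = x := by
  rcases Relation.ReflTransGen.cases_tail ha with h' | ⟨c, _, hc⟩
  · exact h'.symm
  · exact absurd hc (h c)

lemma exists_child_between {a u : V} (h : T.anc a u) (hne : a ≠ u) :
    ∃ v, T.child v u ∧ T.anc a v := by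
  rcases Relation.ReflTransGen.cases_tail h with h' | ⟨c, hc, hcu⟩
  · exact absurd h'.symm hne
  · exact ⟨c, hcu, hc⟩

lemma lca_diff_children {u v1 v2 x y : V} (h1 : T.child v1 u) (h2 : T.child v2 u)
    (hne : v1 ≠ v2) (hx : T.anc x v1) (hy : T.anc y v2) : T.isLCA u x y := by
  refine ⟨hx.tail h1, hy.tail h2, ?_⟩
  intro w hxw hyw
  rcases anc_total hxw hx with hwv1 | hv1w
  · exfalso
    have hyv1 : T.anc y v1 := hyw.trans hwv1
    rcases anc_total hyv1 hy with h' | h'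
    · exact sibling_not_anc h1 h2 hne h'
    · exact sibling_not_anc h2 h1 (Ne.symm hne) h'
  · rcases anc_total hv1w (Relation.ReflTransGen.single h1) with huw | hwu
    · rcases Relation.ReflTransGen.cases_head hv1w with heq | ⟨c, hc, hcw⟩
      · exfalso
        have hyv1 : T.anc y v1 := heq ▸ hyw
        rcases anc_total hyv1 hy with h' | h'
        · exact sibling_not_anc h1 h2 hne h'
        · exact sibling_not_anc h2 h1 (Ne.symm hne) h'
      · rw [h1] at hc
        rw [← Option.some.inj hc] at hcw
        exact hcw
    · exact hwu

lemma lca_lower_bound {u v x z w : V} (hvu : T.child v u) (hx : T.anc x v)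
    (hz : ¬ T.anc z v) (hw : T.isLCA w x z) : T.anc u w := by
  rcases anc_total hw.1 hx with hwv | hvw
  · exact absurd (hw.2.1.trans hwv) hz
  · rcases Relation.ReflTransGen.cases_head hvw with heq | ⟨c, hc, hcw⟩
    · exact absurd (heq ▸ hw.2.1) hz
    · rw [hvu] at hc
      rw [← Option.some.inj hc] at hcw
      exact hcw

lemma exists_min_anc [Fintype V] {S : Set V} (hne : S.Nonempty) :
    ∃ m ∈ S, ∀ x ∈ S, T.anc x m → x = m := by
  obtain ⟨m, hmS, hmax⟩ := Set.Finite.exists_maximalFor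
    (fun v => {w | T.anc v w}.ncard) S (Set.toFinite S) hne
  refine ⟨m, hmS, fun x hxS hxm => ?_⟩
  by_contra hne'
  have hsub : {w | T.anc m w} ⊂ {w | T.anc x w} := by
    constructor
    · intro w hw; exact hxm.trans hw
    · intro hsub'
      exact hne' (anc_antisymm hxm (hsub' (Relation.ReflTransGen.refl)))
  have hlt : {w | T.anc m w}.ncard < {w | T.anc x w}.ncard :=
    Set.ncard_lt_ncard hsub (Set.toFinite _)
  have : {w | T.anc x w}.ncard ≤ {w | T.anc m w}.ncard := hmax (j := x) hxS (le_of_lt hlt)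
  omega

lemma exists_inner_pair [Fintype V] (σT : V → C) {v2 : V} {r s : C}
    (hr : r ∈ T.leafColors σT v2) (hs : s ∈ T.leafColors σT v2) (hrs : r ≠ s) :
    ∃ m c c' a b, T.anc m v2 ∧ T.child c m ∧ T.child c' m ∧ c ≠ c' ∧
      T.isLeaf a ∧ T.isLeaf b ∧ σT a = r ∧ σT b = s ∧ T.anc a c ∧ T.anc b c' ∧
      s ∉ T.leafColors σT c ∧ r ∉ T.leafColors σT c' := by
  set S : Set V := {w | T.anc w v2 ∧ r ∈ T.leafColors σT w ∧ s ∈ T.leafColors σT w} with hS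
  have hne : S.Nonempty := ⟨v2, Relation.ReflTransGen.refl, hr, hs⟩
  obtain ⟨m, ⟨hmv2, hrm, hsm⟩, hmin⟩ := exists_min_anc (T := T) hne
  obtain ⟨a, hal, ham, har⟩ := hrm
  obtain ⟨b, hbl, hbm, hbs⟩ := hsm
  -- m cannot be a leaf
  have hmnl : ¬ T.isLeaf m := by
    intro hml
    have h1 : a = m := hml.anc_eq ham
    have h2 : b = m := hml.anc_eq hbm
    exact hrs (har ▸ h1 ▸ h2 ▸ hbs ▸ rfl : r = s)
  have hanm : a ≠ m := by rintro rfl; exact hmnl hal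
  have hbnm : b ≠ m := by rintro rfl; exact hmnl hbl
  obtain ⟨c, hcm, hac⟩ := exists_child_between ham hanm
  obtain ⟨c', hc'm, hbc'⟩ := exists_child_between hbm hbnm
  have hcnm : ∀ d : V, T.child d m → d ≠ m := by
    rintro d hd rfl; exact parent_ne_self d hd
  have hsc : s ∉ T.leafColors σT c := by
    intro hsc
    have hcS : c ∈ S := ⟨(Relation.ReflTransGen.single hcm).trans hmv2,
      ⟨a, hal, hac, har⟩, hsc⟩
    exact hcnm c hcm (hmin c hcS (Relation.ReflTransGen.single hcm))
  have hrc' : r ∉ T.leafColors σT c' := by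
    intro hrc'
    have hc'S : c' ∈ S := ⟨(Relation.ReflTransGen.single hc'm).trans hmv2,
      hrc', ⟨b, hbl, hbc', hbs⟩⟩
    exact hcnm c' hc'm (hmin c' hc'S (Relation.ReflTransGen.single hc'm))
  have hcc' : c ≠ c' := by
    rintro rfl
    exact hrc' ⟨a, hal, hac, har⟩
  exact ⟨m, c, c', a, b, hmv2, hcm, hc'm, hcc', hal, hbl, har, hbs, hac, hbc', hsc, hrc'⟩

lemma bestMatch_of_children (σT : V → C) {u v v' x y : V}
    (hv : T.child v u) (hv' : T.child v' u) (hne : v ≠ v')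
    (hx : T.isLeaf x) (hy : T.isLeaf y) (hxv : T.anc x v) (hyv : T.anc y v')
    (hcol : σT x ≠ σT y) (hmiss : σT y ∉ T.leafColors σT v) :
    T.bestMatch σT x y := by
  refine ⟨hx, hy, hcol, ?_⟩
  intro y' hy' hcy' w w' hw hw'
  have hwu : w = u := lca_unique hw (lca_diff_children hv hv' hne hxv hyv)
  have hy'v : ¬ T.anc y' v := fun h => hmiss ⟨y', hy', h, hcy'⟩
  rw [hwu]
  exact lca_lower_bound hv hxv hy'v hw'

end PTree

/-- A BMG `(𝔾,σ)` explained by `(T,σ)` contains an hourglass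
`[xy ⋈ x'y']` as an induced subgraph if and only if there is an inner vertex `u`
of `T` with three distinct children `v₁, v₂, v₃` and two distinct colors `r, s`
such that `r ∈ σ(L(T(v₁)))`, `r, s ∈ σ(L(T(v₂)))`, `s ∈ σ(L(T(v₃)))`,
`s ∉ σ(L(T(v₁)))` and `r ∉ σ(L(T(v₃)))`. -/
theorem stmt_17 {V L C : Type*} [Fintype V] (T : PTree V) (ι : L → V)
    (σT : V → C) (σ : L → C) (E : L → L → Prop)
    (hexp : Explains T ι σT σ E) :
    (∃ x x' y y' : L, x ≠ x' ∧ x ≠ y ∧ x ≠ y' ∧ x' ≠ y ∧ x' ≠ y' ∧ y ≠ y' ∧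
      σ x = σ x' ∧ σ y = σ y' ∧ σ x ≠ σ y ∧
      (E x y ∧ E y x) ∧ (E x' y' ∧ E y' x') ∧ E x y' ∧ E y x' ∧
      ¬ E y' x ∧ ¬ E x' y) ↔
    (∃ (u v₁ v₂ v₃ : V) (r s : C), v₁ ≠ v₂ ∧ v₁ ≠ v₃ ∧ v₂ ≠ v₃ ∧
      T.child v₁ u ∧ T.child v₂ u ∧ T.child v₃ u ∧ r ≠ s ∧
      r ∈ T.leafColors σT v₁ ∧ r ∈ T.leafColors σT v₂ ∧
      s ∈ T.leafColors σT v₂ ∧ s ∈ T.leafColors σT v₃ ∧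
      s ∉ T.leafColors σT v₁ ∧ r ∉ T.leafColors σT v₃) := by
  obtain ⟨hinj, hleaf, hsurj, hσι, hE⟩ := hexp
  constructor
  · rintro ⟨x, x', y, y', hxx', hxy, hxy', hx'y, hx'y', hyy', hσxx', hσyy', hσxy,
      ⟨hExy, hEyx⟩, ⟨hEx'y', hEy'x'⟩, hExy', hEyx', hnEy'x, hnEx'y⟩
    have bmXY : T.bestMatch σT (ι x) (ι y) := (hE x y).1 hExy
    have bmYX : T.bestMatch σT (ι y) (ι x) := (hE y x).1 hEyx
    have bmX'Y' : T.bestMatch σT (ι x') (ι y') := (hE x' y').1 hEx'y'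
    have bmY'X' : T.bestMatch σT (ι y') (ι x') := (hE y' x').1 hEy'x'
    have bmXY' : T.bestMatch σT (ι x) (ι y') := (hE x y').1 hExy'
    have bmYX' : T.bestMatch σT (ι y) (ι x') := (hE y x').1 hEyx'
    have hσXX' : σT (ι x') = σT (ι x) := by rw [hσι, hσι, hσxx']
    have hσYY' : σT (ι y') = σT (ι y) := by rw [hσι, hσι, hσyy']
    obtain ⟨u, hu⟩ := PTree.exists_lca (T := T) (ι x) (ι y)
    obtain ⟨u2, hu2⟩ := PTree.exists_lca (T := T) (ι x) (ι y')
    have hu2u : u2 = u := PTree.anc_antisymm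
      (bmXY'.2.2.2 (ι y) (hleaf y) hσYY'.symm u2 u hu2 hu)
      (bmXY.2.2.2 (ι y') (hleaf y') hσYY' u u2 hu hu2)
    have huXY' : T.isLCA u (ι x) (ι y') := hu2u ▸ hu2
    obtain ⟨u3, hu3⟩ := PTree.exists_lca (T := T) (ι y) (ι x')
    have hu3u : u3 = u := PTree.anc_antisymm
      (bmYX'.2.2.2 (ι x) (hleaf x) hσXX'.symm u3 u hu3 hu.symm)
      (bmYX.2.2.2 (ι x') (hleaf x') hσXX' u u3 hu.symm hu3)
    have huYX' : T.isLCA u (ι y) (ι x') := hu3u ▸ hu3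
    obtain ⟨w, hw⟩ := PTree.exists_lca (T := T) (ι x') (ι y')
    have hwu : T.anc w u := hw.2.2 u huYX'.2.1 huXY'.2.1
    have hnbm : ¬ T.bestMatch σT (ι y') (ι x) := fun h => hnEy'x ((hE y' x).2 h)
    have hC : σT (ι y') ≠ σT (ι x) := by
      rw [hσι, hσι, ← hσyy']; exact fun h => hσxy h.symm
    have hD : ¬ ∀ z, T.isLeaf z → σT z = σT (ι x) →
        ∀ p q, T.isLCA p (ι y') (ι x) → T.isLCA q (ι y') z → T.anc p q :=
      fun hD' => hnbm ⟨hleaf y', hleaf x, hC, hD'⟩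
    push_neg at hD
    obtain ⟨z, hzl, hzc, p, q, hp, hq, hnpq⟩ := hD
    have hpu : p = u := PTree.lca_unique hp huXY'.symm
    rw [hpu] at hnpq
    have hwq : T.anc w q :=
      bmY'X'.2.2.2 z hzl (hzc.trans hσXX'.symm) w q hw.symm hq
    have hwne : w ≠ u := fun h => hnpq (h ▸ hwq)
    have hXne : (ι x) ≠ u := by
      intro h
      have hYX : (ι y) = (ι x) := (hleaf x).anc_eq (h ▸ hu.2.1)
      exact hxy (hinj hYX).symm
    obtain ⟨v1, hv1u, hXv1⟩ := PTree.exists_child_between hu.1 hXne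
    have hYne : (ι y) ≠ u := by
      intro h
      have hXY : (ι x) = (ι y) := (hleaf y).anc_eq (h ▸ hu.1)
      exact hxy (hinj hXY)
    obtain ⟨v3, hv3u, hYv3⟩ := PTree.exists_child_between hu.2.1 hYne
    obtain ⟨v2, hv2u, hwv2⟩ := PTree.exists_child_between hwu hwne
    have hX'v2 : T.anc (ι x') v2 := hw.1.trans hwv2
    have hY'v2 : T.anc (ι y') v2 := hw.2.1.trans hwv2
    have h12 : v1 ≠ v2 := by
      intro h
      exact PTree.child_not_anc hv1u (huXY'.2.2 v1 hXv1 (by rw [h]; exact hY'v2))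
    have h13 : v1 ≠ v3 := by
      intro h
      exact PTree.child_not_anc hv1u (hu.2.2 v1 hXv1 (by rw [h]; exact hYv3))
    have h23 : v2 ≠ v3 := by
      intro h
      exact PTree.child_not_anc hv2u (huYX'.2.2 v2 (by rw [h]; exact hYv3) hX'v2)
    refine ⟨u, v1, v2, v3, σT (ι x), σT (ι y), h12, h13, h23, hv1u, hv2u, hv3u, ?_,
      ⟨ι x, hleaf x, hXv1, rfl⟩, ⟨ι x', hleaf x', hX'v2, hσXX'⟩,
      ⟨ι y', hleaf y', hY'v2, hσYY'⟩, ⟨ι y, hleaf y, hYv3, rfl⟩, ?_, ?_⟩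
    · rw [hσι, hσι]; exact hσxy
    · rintro ⟨z', hz'l, hz'v1, hz'c⟩
      obtain ⟨q0, hq0⟩ := PTree.exists_lca (T := T) (ι x) z'
      have h1 : T.anc u q0 := bmXY.2.2.2 z' hz'l hz'c u q0 hu hq0
      have h2 : T.anc q0 v1 := hq0.2.2 v1 hXv1 hz'v1
      exact PTree.child_not_anc hv1u (h1.trans h2)
    · rintro ⟨z', hz'l, hz'v3, hz'c⟩
      obtain ⟨q0, hq0⟩ := PTree.exists_lca (T := T) (ι y) z'
      have h1 : T.anc u q0 := bmYX.2.2.2 z' hz'l hz'c u q0 hu.symm hq0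
      have h2 : T.anc q0 v3 := hq0.2.2 v3 hYv3 hz'v3
      exact PTree.child_not_anc hv3u (h1.trans h2)
  · rintro ⟨u, v1, v2, v3, r, s, h12, h13, h23, hc1, hc2, hc3, hrs, hr1, hr2, hs2, hs3,
      hns1, hnr3⟩
    obtain ⟨X, hXl, hXv1, hXr⟩ := hr1
    obtain ⟨Y, hYl, hYv3, hYs⟩ := hs3
    obtain ⟨m, c, c', A, B, hmv2, hcm, hc'm, hcc', hAl, hBl, hAr, hBs, hAc, hBc', hsc, hrc'⟩ :=
      PTree.exists_inner_pair (T := T) σT hr2 hs2 hrs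
    have hAv2 : T.anc A v2 := (hAc.tail hcm).trans hmv2
    have hBv2 : T.anc B v2 := (hBc'.tail hc'm).trans hmv2
    have hσXY : σT X ≠ σT Y := by rw [hXr, hYs]; exact hrs
    have bmXY : T.bestMatch σT X Y :=
      PTree.bestMatch_of_children σT hc1 hc3 h13 hXl hYl hXv1 hYv3 hσXY
        (by rw [hYs]; exact hns1)
    have bmYX : T.bestMatch σT Y X :=
      PTree.bestMatch_of_children σT hc3 hc1 h13.symm hYl hXl hYv3 hXv1 hσXY.symm
        (by rw [hXr]; exact hnr3)
    have bmXB : T.bestMatch σT X B :=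
      PTree.bestMatch_of_children σT hc1 hc2 h12 hXl hBl hXv1 hBv2
        (by rw [hXr, hBs]; exact hrs) (by rw [hBs]; exact hns1)
    have bmYA : T.bestMatch σT Y A :=
      PTree.bestMatch_of_children σT hc3 hc2 h23.symm hYl hAl hYv3 hAv2
        (by rw [hYs, hAr]; exact hrs.symm) (by rw [hAr]; exact hnr3)
    have bmAB : T.bestMatch σT A B :=
      PTree.bestMatch_of_children σT hcm hc'm hcc' hAl hBl hAc hBc'
        (by rw [hAr, hBs]; exact hrs) (by rw [hBs]; exact hsc)
    have bmBA : T.bestMatch σT B A :=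
      PTree.bestMatch_of_children σT hc'm hcm hcc'.symm hBl hAl hBc' hAc
        (by rw [hAr, hBs]; exact hrs.symm) (by rw [hAr]; exact hrc')
    have hum : ¬ T.anc u m := fun h => PTree.child_not_anc hc2 (h.trans hmv2)
    have hlcaAB : T.isLCA m A B := PTree.lca_diff_children hcm hc'm hcc' hAc hBc'
    have nbmBX : ¬ T.bestMatch σT B X := fun hbm =>
      hum (hbm.2.2.2 A hAl (by rw [hAr, hXr]) u m
        (PTree.lca_diff_children hc2 hc1 h12.symm hBv2 hXv1) hlcaAB.symm)
    have nbmAY : ¬ T.bestMatch σT A Y := fun hbm =>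
      hum (hbm.2.2.2 B hBl (by rw [hBs, hYs]) u m
        (PTree.lca_diff_children hc2 hc3 h23 hAv2 hYv3) hlcaAB)
    obtain ⟨lx, hlx⟩ := hsurj X hXl
    obtain ⟨la, hla⟩ := hsurj A hAl
    obtain ⟨ly, hly⟩ := hsurj Y hYl
    obtain ⟨lb, hlb⟩ := hsurj B hBl
    have hσlx : σ lx = r := by rw [← hσι, hlx, hXr]
    have hσla : σ la = r := by rw [← hσι, hla, hAr]
    have hσly : σ ly = s := by rw [← hσι, hly, hYs]
    have hσlb : σ lb = s := by rw [← hσι, hlb, hBs]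
    have hXA : X ≠ A := by
      intro h
      rcases PTree.anc_total (T := T) hXv1 (by rw [h]; exact hAv2) with h' | h'
      · exact PTree.sibling_not_anc hc1 hc2 h12 h'
      · exact PTree.sibling_not_anc hc2 hc1 h12.symm h'
    have hYB : Y ≠ B := by
      intro h
      rcases PTree.anc_total (T := T) hYv3 (by rw [h]; exact hBv2) with h' | h'
      · exact PTree.sibling_not_anc hc3 hc2 h23.symm h'
      · exact PTree.sibling_not_anc hc2 hc3 h23 h'
    refine ⟨lx, la, ly, lb, ?_, ?_, ?_, ?_, ?_, ?_, ?_, ?_, ?_, ?_, ?_, ?_, ?_, ?_, ?_⟩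
    · exact fun h => hXA (by rw [← hlx, ← hla, h])
    · exact fun h => hrs (by rw [← hσlx, h, hσly])
    · exact fun h => hrs (by rw [← hσlx, h, hσlb])
    · exact fun h => hrs (by rw [← hσla, h, hσly])
    · exact fun h => hrs (by rw [← hσla, h, hσlb])
    · exact fun h => hYB (by rw [← hly, ← hlb, h])
    · rw [hσlx, hσla]
    · rw [hσly, hσlb]
    · rw [hσlx, hσly]; exact hrs
    · exact ⟨(hE lx ly).2 (by rw [hlx, hly]; exact bmXY),
        (hE ly lx).2 (by rw [hlx, hly]; exact bmYX)⟩
    · exact ⟨(hE la lb).2 (by rw [hla, hlb]; exact bmAB),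
        (hE lb la).2 (by rw [hla, hlb]; exact bmBA)⟩
    · exact (hE lx lb).2 (by rw [hlx, hlb]; exact bmXB)
    · exact (hE ly la).2 (by rw [hly, hla]; exact bmYA)
    · intro h
      have := (hE lb lx).1 h
      rw [hlb, hlx] at this
      exact nbmBX this
    · intro h
      have := (hE la ly).1 h
      rw [hla, hly] at this
      exact nbmAY this
end

section
/- Let (T,σ) be a leaf-colored tree and t an event labeling of the inner vertices of T with values in {speciation, duplication}. If the orthology graph Θ(T,t) — with vertex set L(T) and edges uv iff t(lca(u,v)) = speciation — satisfies the property that for every inner vertex v labeled speciation, all pairs of distinct children have disjoint subtree color sets (i.e., t refines the extremal labeling), then every edge of Θ(T,t) is an edge (reciprocal best match) in the BMG G(T,σ). -/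
namespace PTree
variable {V C : Type*}

lemma my_no_cycle (T : PTree V) (x : V)
    (h : Relation.TransGen (fun a b => T.parent a = some b) x x) : False := by
  have key : ∀ y : V, Relation.ReflTransGen (fun a b => T.parent a = some b) y T.root →
      Relation.TransGen (fun a b => T.parent a = some b) y y → False := by
    intro y hy
    induction hy using Relation.ReflTransGen.head_induction_on with
    | refl =>
      intro hc
      obtain ⟨z, hz, -⟩ := Relation.TransGen.head'_iff.mp hc
      rw [T.root_parent] at hz; exact absurd hz (by simp)
    | head h' _ ih =>
      intro hc
      obtain ⟨z, hz, hzy⟩ := Relation.TransGen.head'_iff.mp hc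
      rw [h'] at hz
      obtain rfl := Option.some.inj hz
      exact ih (Relation.TransGen.tail' hzy h')
  exact key x (T.connected x) h

lemma my_anc_antisymm {T : PTree V} {x y : V} (hxy : T.anc x y) (hyx : T.anc y x) : x = y := by
  by_contra hne
  rcases Relation.reflTransGen_iff_eq_or_transGen.mp hxy with rfl | htg
  · exact hne rfl
  · exact my_no_cycle T x (htg.trans_left hyx)

lemma my_anc_comparable {T : PTree V} {a u u' : V} (h1 : T.anc a u) (h2 : T.anc a u') :
    T.anc u u' ∨ T.anc u' u := by
  induction h1 using Relation.ReflTransGen.head_induction_on with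
  | refl => exact Or.inl h2
  | @head c z hstep htail ih =>
    rcases h2.cases_head with rfl | ⟨z', hz', hz'u'⟩
    · exact Or.inr (Relation.ReflTransGen.head hstep htail)
    · rw [hstep] at hz'; obtain rfl := Option.some.inj hz'
      exact ih hz'u'

lemma my_step_to_child {T : PTree V} {a u : V} (h : T.anc a u) (hne : a ≠ u) :
    ∃ w, T.child w u ∧ T.anc a w := by
  rcases Relation.reflTransGen_iff_eq_or_transGen.mp h with rfl | htg
  · exact absurd rfl hne
  · obtain ⟨w, hw, hwu⟩ := Relation.TransGen.tail'_iff.mp htg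
    exact ⟨w, hwu, hw⟩


lemma my_child_unique {T : PTree V} {a v w u : V} (hv : T.child v u) (hw : T.child w u)
    (hav : T.anc a v) (haw : T.anc a w) : v = w := by
  have key : ∀ v w : V, T.child v u → T.child w u → T.anc v w → v = w := by
    intro v w hv hw hvw
    rcases hvw.cases_head with rfl | ⟨z, hz, hzw⟩
    · rfl
    · rw [hv] at hz; obtain rfl := Option.some.inj hz
      exact absurd (Relation.TransGen.tail' hzw hw) (fun hc => my_no_cycle T _ hc)
  rcases my_anc_comparable hav haw with h | h
  · exact key v w hv hw h
  · exact (key w v hw hv h).symm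

lemma my_lca_ne_leaf {T : PTree V} {u a b : V} (hu : T.isLCA u a b) (ha : T.isLeaf a)
    (hab : a ≠ b) : u ≠ a := by
  rintro rfl
  rcases Relation.reflTransGen_iff_eq_or_transGen.mp hu.2.1 with rfl | htg
  · exact hab rfl
  · obtain ⟨w, hw, hwu⟩ := Relation.TransGen.tail'_iff.mp htg
    exact ha w hwu

lemma my_color_mem {T : PTree V} {σ : V → C} {a v : V} (ha : T.isLeaf a) (h : T.anc a v) :
    σ a ∈ T.leafColors σ v := ⟨a, ha, h, rfl⟩

lemma my_bm (T : PTree V) (σ : V → C) {u : V}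
    (ht : ∀ v₁ v₂, T.child v₁ u → T.child v₂ u → v₁ ≠ v₂ →
        T.leafColors σ v₁ ∩ T.leafColors σ v₂ = ∅)
    (a b : V) (ha : T.isLeaf a) (hb : T.isLeaf b) (hab : a ≠ b)
    (hu : T.isLCA u a b) : T.bestMatch σ a b := by
  obtain ⟨hau, hbu, hmin⟩ := hu
  have hua : u ≠ a := my_lca_ne_leaf ⟨hau, hbu, hmin⟩ ha hab
  have hub : u ≠ b := my_lca_ne_leaf ⟨hbu, hau, fun w h1 h2 => hmin w h2 h1⟩ hb (Ne.symm hab)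
  obtain ⟨v₁, hv₁, hav₁⟩ := my_step_to_child hau (Ne.symm hua)
  obtain ⟨v₂, hv₂, hbv₂⟩ := my_step_to_child hbu (Ne.symm hub)
  have hv12 : v₁ ≠ v₂ := by
    rintro rfl
    have : T.anc u v₁ := hmin v₁ hav₁ hbv₂
    exact my_no_cycle T u (Relation.TransGen.tail' this hv₁)
  refine ⟨ha, hb, ?_, ?_⟩
  · intro hcol
    have : σ a ∈ T.leafColors σ v₁ ∩ T.leafColors σ v₂ :=
      ⟨my_color_mem ha hav₁, hcol ▸ my_color_mem hb hbv₂⟩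
    rw [ht v₁ v₂ hv₁ hv₂ hv12] at this
    exact this
  · intro y' hy' hcy' w w' hw hw'
    have hwu : w = u := my_anc_antisymm (hw.2.2 u hau hbu) (hmin w hw.1 hw.2.1)
    rw [hwu]
    rcases my_anc_comparable hau hw'.1 with h | h
    · exact h
    · by_cases hw'u : w' = u
      · exact hw'u ▸ Relation.ReflTransGen.refl
      · obtain ⟨c, hc, hw'c⟩ := my_step_to_child h hw'u
        have hac : T.anc a c := hw'.1.trans hw'c
        obtain rfl : c = v₁ := my_child_unique hc hv₁ hac hav₁
        have : σ y' ∈ T.leafColors σ c ∩ T.leafColors σ v₂ :=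
          ⟨my_color_mem hy' (hw'.2.1.trans hw'c), hcy' ▸ my_color_mem hb hbv₂⟩
        rw [ht c v₂ hc hv₂ hv12] at this
        exact this.elim

end PTree

/-- If the event labeling `t` refines the extremal labeling, i.e.
every vertex labeled speciation has pairwise disjoint subtree color sets on its
distinct children, then every edge of the orthology graph `Θ(T,t)` is an edge
(reciprocal best match) of the BMG `G(T,σ)`. -/
theorem stmt_18 {V C : Type*} [Fintype V] (T : PTree V) (σ : V → C)
    (t : V → Event)
    (ht : ∀ v, t v = Event.speciation →
      ∀ v₁ v₂, T.child v₁ v → T.child v₂ v → v₁ ≠ v₂ →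
        T.leafColors σ v₁ ∩ T.leafColors σ v₂ = ∅)
    (a b : V) (ha : T.isLeaf a) (hb : T.isLeaf b) (hab : a ≠ b)
    (u : V) (hu : T.isLCA u a b) (hspec : t u = Event.speciation) :
    T.edge σ a b := by
  exact ⟨PTree.my_bm T σ (ht u hspec) a b ha hb hab hu,
    PTree.my_bm T σ (ht u hspec) b a hb ha (Ne.symm hab)
      ⟨hu.2.1, hu.1, fun w h1 h2 => hu.2.2 w h2 h1⟩⟩
end
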